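/- Under the setup: encoder output E = f(d) ∈ ℝ^{L×N}, decoder g(z) = σ(zW) with linear normalization σ and semi-orthogonal W (W W^T = I_N), the encoder-decoder cooperation condition f(d) = g^{-1}(d) (i.e., σ(EW) reconstructs the document one-hot matrix d after normalization, meaning σ^{-1}(d)W^T = E), and k_l = Σ_d (EW)_{l,d} ∈ (0,1): the MLM-loss gradient ∂L₁/∂E = −(1/L)·1_{L×L}·[σ(EW) − d]·W^T satisfies ∂L₁/∂E = −(1/L)·1_{L×L}·diag((1−k_l)/k_l)·E. -/

import Mathlib

open Matrix BigOperators

/-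
Write σ(EW) = diag(1/k)·EW. Semi-orthogonality W Wᵀ = 1 collapses σ(EW)·Wᵀ to diag(1/k)·E, and
cooperation turns d·Wᵀ into E, so the residual (σ(EW) − d)·Wᵀ equals diag(1/k − 1)·E = diag((1 − k)/k)·E.
-/

namespace Matrix

variable {m n : Type*} [Fintype m] [DecidableEq m] {K : Type*} [Field K]

theorem of_div_eq_diagonal_inv_mul (A : Matrix m n K) (k : m → K) :
    (of fun i j => A i j / k i) = diagonal (fun i => (k i)⁻¹) * A := by
  ext i j
  simp [diagonal_mul, div_eq_inv_mul]

theorem diagonal_inv_mul_sub_eq_diagonal_mul (E : Matrix m n K) {k : m → K}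
    (hk : ∀ i, k i ≠ 0) :
    diagonal (fun i => (k i)⁻¹) * E - E = diagonal (fun i => (1 - k i) / k i) * E := by
  have hdiag : diagonal (fun i => (k i)⁻¹) - 1 = diagonal (fun i => (1 - k i) / k i) := by
    rw [← diagonal_one, diagonal_sub]
    congr 1
    funext i
    field_simp [hk i]
  rw [← hdiag, Matrix.sub_mul, Matrix.one_mul]

variable {p : Type*} [Fintype n] [DecidableEq n] [Fintype p]

theorem of_div_sub_mul_transpose_eq_diagonal_mul {E : Matrix m n K} {W : Matrix n p K}
    {d : Matrix m p K} (hW : W * Wᵀ = 1) (hcoop : d * Wᵀ = E) {k : m → K}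
    (hk : ∀ i, k i ≠ 0) :
    ((of fun i j => (E * W) i j / k i) - d) * Wᵀ = diagonal (fun i => (1 - k i) / k i) * E := by
  rw [of_div_eq_diagonal_inv_mul, Matrix.sub_mul, Matrix.mul_assoc, Matrix.mul_assoc, hW,
    Matrix.mul_one, hcoop, diagonal_inv_mul_sub_eq_diagonal_mul E hk]

end Matrix

theorem mlm_gradient_identity_general
    {L N D : ℕ}
    (E : Matrix (Fin L) (Fin N) ℝ) (W : Matrix (Fin N) (Fin D) ℝ)
    (d : Matrix (Fin L) (Fin D) ℝ)
    (hW : W * W.transpose = 1)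
    (hcoop : d * W.transpose = E)
    (k : Fin L → ℝ)
    (hk01 : ∀ l, 0 < k l ∧ k l < 1) :
    (-(1 / (L : ℝ))) •
        ((Matrix.of fun (_ : Fin L) (_ : Fin L) => (1 : ℝ)) *
          ((Matrix.of fun l j => (E * W) l j / k l) - d) * W.transpose) =
      (-(1 / (L : ℝ))) •
        ((Matrix.of fun (_ : Fin L) (_ : Fin L) => (1 : ℝ)) *
          Matrix.diagonal (fun l => (1 - k l) / k l) * E) := by
  have hk : ∀ l, k l ≠ 0 := fun l => (hk01 l).1.ne'
  rw [Matrix.mul_assoc, Matrix.of_div_sub_mul_transpose_eq_diagonal_mul hW hcoop hk,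
    Matrix.mul_assoc]

/-- MLM gradient identity: under semi-orthogonality, encoder-decoder cooperation
(d·Wᵀ = E) and row sums k_l ∈ (0,1) of E·W,
−(1/L)·1_{L×L}·(σ(EW) − d)·Wᵀ = −(1/L)·1_{L×L}·diag((1−k)/k)·E. -/
theorem mlm_gradient_identity
    {L N D : ℕ}
    (E : Matrix (Fin L) (Fin N) ℝ) (W : Matrix (Fin N) (Fin D) ℝ)
    (d : Matrix (Fin L) (Fin D) ℝ)
    (hW : W * W.transpose = 1)
    (hcoop : d * W.transpose = E)
    (k : Fin L → ℝ) (hk : ∀ l, k l = ∑ j, (E * W) l j)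
    (hk01 : ∀ l, 0 < k l ∧ k l < 1) :
    (-(1 / (L : ℝ))) •
        ((Matrix.of fun (_ : Fin L) (_ : Fin L) => (1 : ℝ)) *
          ((Matrix.of fun l j => (E * W) l j / k l) - d) * W.transpose) =
      (-(1 / (L : ℝ))) •
        ((Matrix.of fun (_ : Fin L) (_ : Fin L) => (1 : ℝ)) *
          Matrix.diagonal (fun l => (1 - k l) / k l) * E) :=
  mlm_gradient_identity_general E W d hW hcoop k hk01
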